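/- arXiv:1410.1371 — 4 statements merged into one kernel-verified Lean document; each statement's English description precedes it below -/
import Mathlib

section
/- For every positive integer k and prime power q, and for every vertex (d,e) of the digraph H_k^q, there exists an automorphism φ of H_k^q with φ(d,e) = (e₁, e₁), where e₁ = (1,0,…,0)ᵀ ∈ F_q^k. -/
/-- The standard bilinear form `⟨v,w⟩ = ∑ i, v i * w i` on `F^k`. -/
def bil {k : ℕ} {F : Type} [Field F] (v w : Fin k → F) : F := ∑ i, v i * w i

/-- A vector is *normal* if its first nonzero entry equals `1`. -/
def IsNormal {k : ℕ} {F : Type} [Field F] (v : Fin k → F) : Prop :=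
  ∃ i : Fin k, v i = 1 ∧ ∀ j : Fin k, j < i → v j = 0

/-- The vertex set `W` of the digraph `H_k^q`. -/
def IsHVertex {k : ℕ} {F : Type} [Field F] (p : (Fin k → F) × (Fin k → F)) : Prop :=
  IsNormal p.1 ∧ IsNormal p.2 ∧ bil p.1 p.2 ≠ 0

/-- The vertices of the digraph `H_k^q`. -/
abbrev HVtx (k : ℕ) (F : Type) [Field F] : Type :=
  {p : (Fin k → F) × (Fin k → F) // IsHVertex p}

/-- The (loopless) adjacency of `H_k^q`: there is an edge from the vertex `(v,w)` to a
distinct vertex `(v',w')` iff `⟨v,w'⟩ ≠ 0`. -/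
def HAdj {k : ℕ} {F : Type} [Field F] (a b : HVtx k F) : Prop :=
  a ≠ b ∧ bil a.val.1 b.val.2 ≠ 0

/-- The directional complement of a loopless digraph: for distinct vertices `a, b`,
`(a,b)` is an edge iff it is not an edge of the original digraph. -/
def digraphCompl {V : Type*} (G : V → V → Prop) : V → V → Prop :=
  fun a b => a ≠ b ∧ ¬ G a b
section Helpers
variable {k : ℕ} {F : Type} [Field F]

attribute [local instance] Classical.propDecidable

lemma bil_comm (v w : Fin k → F) : bil v w = bil w v :=
  Finset.sum_congr rfl fun i _ => mul_comm _ _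

/-- `bil u` as a linear map in the second argument. -/
def bilL (u : Fin k → F) : (Fin k → F) →ₗ[F] F := ∑ i, u i • LinearMap.proj i

lemma bilL_apply (u v : Fin k → F) : bilL u v = bil u v := by
  simp [bilL, bil, LinearMap.sum_apply, smul_eq_mul]

lemma bil_smul_left (c : F) (v w : Fin k → F) : bil (c • v) w = c * bil v w := by
  rw [bil_comm, ← bilL_apply, map_smul, bilL_apply, bil_comm, smul_eq_mul]

lemma bil_smul_right (c : F) (v w : Fin k → F) : bil v (c • w) = c * bil v w := by
  rw [← bilL_apply, map_smul, bilL_apply, smul_eq_mul]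

lemma bil_single (j : Fin k) (w : Fin k → F) : bil (Pi.single j 1) w = w j := by
  simp [bil, Pi.single_apply]

lemma isNormal_ne_zero {v : Fin k → F} (h : IsNormal v) : v ≠ 0 := by
  obtain ⟨i, h1, -⟩ := h
  intro h0
  rw [h0] at h1
  simpa using h1

/-- Normalization of a vector: scale it so its first nonzero entry is 1. -/
noncomputable def normVec (v : Fin k → F) : Fin k → F :=
  if h : (Finset.univ.filter (fun i => v i ≠ 0)).Nonempty
  then (v ((Finset.univ.filter (fun i => v i ≠ 0)).min' h))⁻¹ • v else v

lemma normVec_spec {v : Fin k → F} (hv : v ≠ 0) :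
    ∃ c : F, c ≠ 0 ∧ normVec v = c • v := by
  have h : (Finset.univ.filter (fun i => v i ≠ 0)).Nonempty := by
    obtain ⟨i, hi⟩ := Function.ne_iff.mp hv
    exact ⟨i, by simpa using hi⟩
  have hm := Finset.min'_mem _ h
  rw [Finset.mem_filter] at hm
  exact ⟨_, inv_ne_zero hm.2, by rw [normVec, dif_pos h]⟩

lemma normVec_isNormal {v : Fin k → F} (hv : v ≠ 0) : IsNormal (normVec v) := by
  have h : (Finset.univ.filter (fun i => v i ≠ 0)).Nonempty := by
    obtain ⟨i, hi⟩ := Function.ne_iff.mp hv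
    exact ⟨i, by simpa using hi⟩
  have hm := Finset.min'_mem _ h
  rw [Finset.mem_filter] at hm
  rw [normVec, dif_pos h]
  refine ⟨(Finset.univ.filter (fun i => v i ≠ 0)).min' h, ?_, fun j hj => ?_⟩
  · simp [inv_mul_cancel₀ hm.2]
  · have : v j = 0 := by
      by_contra hj0
      exact absurd (Finset.min'_le _ j (by simpa using hj0)) (not_le.mpr hj)
    simp [this]

lemma normVec_smul {c : F} (hc : c ≠ 0) (v : Fin k → F) :
    normVec (c • v) = normVec v := by
  have hset : (Finset.univ.filter (fun i => (c • v) i ≠ 0))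
      = (Finset.univ.filter (fun i => v i ≠ 0)) := by
    ext i; simp [hc]
  rw [normVec, normVec, hset]
  split_ifs with h
  · have hm := Finset.min'_mem _ h
    rw [Finset.mem_filter] at hm
    rw [smul_smul, Pi.smul_apply, smul_eq_mul, mul_inv_rev,
      mul_assoc, inv_mul_cancel₀ hc, mul_one]
  · have hv0 : v = 0 := by
      funext i
      by_contra hi
      exact h ⟨i, by simpa using hi⟩
    simp [hv0]

lemma normVec_of_isNormal {v : Fin k → F} (hv : IsNormal v) : normVec v = v := by
  obtain ⟨i, h1, h0⟩ := hv
  have h : (Finset.univ.filter (fun j => v j ≠ 0)).Nonempty :=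
    ⟨i, by simp [h1]⟩
  have hmin : (Finset.univ.filter (fun j => v j ≠ 0)).min' h = i := by
    have hm := Finset.min'_mem _ h
    rw [Finset.mem_filter] at hm
    have hle : (Finset.univ.filter (fun j => v j ≠ 0)).min' h ≤ i :=
      Finset.min'_le _ i (by simp [h1])
    rcases lt_or_eq_of_le hle with hlt | heq
    · exact absurd (h0 _ hlt) hm.2
    · exact heq
  rw [normVec, dif_pos h, hmin, h1, inv_one, one_smul]

end Helpers

section Key
variable {k : ℕ} {F : Type} [Field F]

lemma key_construction [Fintype F] (d e : Fin k → F)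
    (hd : IsNormal d) (hde : bil d e ≠ 0) :
    ∃ T S : (Fin k → F) ≃ₗ[F] (Fin k → F),
      (∀ v w, bil (T v) (S w) = bil v w) ∧
      (∃ c : F, c ≠ 0 ∧ T d = c • (fun i : Fin k => if (i : ℕ) = 0 then (1:F) else 0)) ∧
      S e = (fun i : Fin k => if (i : ℕ) = 0 then (1:F) else 0) := by
  classical
  obtain ⟨p, hp1, hp0⟩ := hd
  have hk : 0 < k := p.pos
  set z : Fin k := ⟨0, hk⟩ with hz
  have hed : bil e d ≠ 0 := by rwa [bil_comm]
  set τ : Equiv.Perm (Fin k) := Equiv.swap z p with hτ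
  set L : Fin k → ((Fin k → F) →ₗ[F] F) :=
    fun j => if j = p then bilL e else (LinearMap.proj j - d j • LinearMap.proj p) with hL
  have hLp : ∀ v, L p v = bil e v := by intro v; simp [hL, bilL_apply]
  have hLj : ∀ j, j ≠ p → ∀ v : Fin k → F, L j v = v j - d j * v p := by
    intro j hj v; simp [hL, hj]
  set Tl : (Fin k → F) →ₗ[F] (Fin k → F) := LinearMap.pi (fun i => L (τ i)) with hTl
  have hTl_apply : ∀ v i, Tl v i = L (τ i) v := fun v i => rfl
  -- injectivity
  have hTinj : Function.Injective Tl := by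
    rw [injective_iff_map_eq_zero]
    intro v hv
    have hall : ∀ j, L j v = 0 := by
      intro j
      have := congrFun hv (τ.symm j)
      simpa [hTl_apply, Equiv.apply_symm_apply] using this
    have h1 : ∀ j, j ≠ p → v j = d j * v p := by
      intro j hj
      have := hall j
      rw [hLj j hj] at this
      linear_combination this
    have hvd : v = v p • d := by
      funext j
      by_cases hj : j = p
      · subst hj; simp [hp1]
      · simp [h1 j hj, mul_comm]
    have h2 : bil e v = 0 := by rw [← hLp]; exact hall p
    rw [hvd, bil_smul_right] at h2
    have hvp : v p = 0 := by
      rcases mul_eq_zero.mp h2 with h | h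
      · exact h
      · exact absurd h hed
    rw [hvd, hvp, zero_smul]
  set T : (Fin k → F) ≃ₗ[F] (Fin k → F) := LinearEquiv.ofInjectiveEndo Tl hTinj with hT
  have hTapp : ∀ v, T v = Tl v := fun v => rfl
  -- S
  set Sl : (Fin k → F) →ₗ[F] (Fin k → F) :=
    LinearMap.pi (fun i => bilL (T.symm (Pi.single i 1))) with hSl
  have hSl_apply : ∀ w i, Sl w i = bil (T.symm (Pi.single i 1)) w := by
    intro w i; simp [hSl, LinearMap.pi_apply, bilL_apply]
  -- key identity
  have hsum : ∀ x : Fin k → F, ∑ i, x i • (Pi.single i (1:F) : Fin k → F) = x := by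
    intro x
    have : ∀ i, x i • (Pi.single i (1:F) : Fin k → F) = Pi.single i (x i) := by
      intro i
      rw [← Pi.single_smul, smul_eq_mul, mul_one]
    simp_rw [this]
    exact Finset.univ_sum_single x
  have expand : ∀ u w : Fin k → F,
      bil (T.symm u) w = ∑ i, u i * bil (T.symm (Pi.single i 1)) w := by
    intro u w
    have h1 : T.symm u = ∑ i, u i • T.symm (Pi.single i 1) := by
      conv_lhs => rw [← hsum u]
      rw [map_sum]
      simp_rw [map_smul]
    rw [h1, bil_comm, ← bilL_apply, map_sum]
    simp_rw [map_smul, smul_eq_mul, bilL_apply, bil_comm w]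
  have hkey : ∀ v w, bil (Tl v) (Sl w) = bil v w := by
    intro v w
    have h2 : bil (Tl v) (Sl w) = ∑ i, (Tl v) i * Sl w i := rfl
    rw [h2]
    simp_rw [hSl_apply]
    rw [← expand (Tl v) w, ← hTapp v, T.symm_apply_apply]
  -- S injective
  have hSinj : Function.Injective Sl := by
    rw [injective_iff_map_eq_zero]
    intro w hw
    have hbw : ∀ v, bil v w = 0 := by
      intro v
      have := hkey v w
      rw [hw] at this
      rw [← this]
      simp [bil]
    funext j
    have := hbw (Pi.single j 1)
    rwa [bil_single] at this
  set S : (Fin k → F) ≃ₗ[F] (Fin k → F) := LinearEquiv.ofInjectiveEndo Sl hSinj with hS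
  have hSapp : ∀ w, S w = Sl w := fun w => rfl
  refine ⟨T, S, ?_, ?_, ?_⟩
  · intro v w; rw [hTapp, hSapp]; exact hkey v w
  · refine ⟨bil e d, hed, ?_⟩
    funext i
    rw [hTapp, hTl_apply]
    by_cases hi : i = z
    · subst hi
      have : τ z = p := Equiv.swap_apply_left z p
      rw [this, hLp]
      simp [hz]
    · have hτi : τ i ≠ p := by
        intro hcon
        apply hi
        have := τ.injective (a₁ := i) (a₂ := z)
        exact this (by rw [hcon, Equiv.swap_apply_left])
      rw [hLj _ hτi d, hp1, mul_one, sub_self]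
      have : (i : ℕ) ≠ 0 := by
        intro hcon
        exact hi (Fin.ext hcon)
      simp [this]
  · funext i
    rw [hSapp, hSl_apply]
    have h0 : ∀ u : Fin k → F, bil e u = Tl u z := by
      intro u
      rw [hTl_apply]
      have : τ z = p := Equiv.swap_apply_left z p
      rw [this, hLp]
    rw [bil_comm, h0, ← hTapp, T.apply_symm_apply]
    rw [Pi.single_apply]
    by_cases hi : (i : ℕ) = 0
    · have : z = i := (Fin.ext hi).symm
      simp [this, hi]
    · have : z ≠ i := fun hcon => hi (by rw [← hcon])
      simp [this, hi]

end Key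

section Main
variable {k : ℕ} {F : Type} [Field F]

lemma hmove (T S : (Fin k → F) ≃ₗ[F] (Fin k → F))
    (hTS : ∀ v w, bil (T v) (S w) = bil v w)
    (p : (Fin k → F) × (Fin k → F)) (hp : IsHVertex p) :
    IsHVertex ((normVec (T p.1), normVec (S p.2)) : (Fin k → F) × (Fin k → F)) := by
  obtain ⟨h1, h2, h3⟩ := hp
  have hT0 : T p.1 ≠ 0 := by
    rw [Ne, LinearEquiv.map_eq_zero_iff]
    exact isNormal_ne_zero h1
  have hS0 : S p.2 ≠ 0 := by
    rw [Ne, LinearEquiv.map_eq_zero_iff]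
    exact isNormal_ne_zero h2
  obtain ⟨c1, hc1, hn1⟩ := normVec_spec hT0
  obtain ⟨c2, hc2, hn2⟩ := normVec_spec hS0
  refine ⟨normVec_isNormal hT0, normVec_isNormal hS0, ?_⟩
  show bil (normVec (T p.1)) (normVec (S p.2)) ≠ 0
  rw [hn1, hn2, bil_smul_left, bil_smul_right, hTS]
  exact mul_ne_zero hc1 (mul_ne_zero hc2 h3)

end Main

/-- For every positive integer `k` and prime power `q` and every vertex `(d,e)` of
`H_k^q`, there is an automorphism `φ` of `H_k^q` with `φ(d,e) = (e₁,e₁)`,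
where `e₁ = (1,0,…,0)ᵀ`. -/
theorem Hkq_automorphism_to_e1e1 (q k : ℕ) (hq : IsPrimePow q) (hk : 0 < k)
    (F : Type) [Field F] [Fintype F] (hF : Fintype.card F = q) (a : HVtx k F) :
    ∃ φ : HVtx k F ≃ HVtx k F,
      (∀ x y : HVtx k F, HAdj x y ↔ HAdj (φ x) (φ y)) ∧
      (φ a).val = ((fun i : Fin k => if (i : ℕ) = 0 then (1 : F) else 0),
                   (fun i : Fin k => if (i : ℕ) = 0 then (1 : F) else 0)) := by
  obtain ⟨⟨d, e⟩, hd, he, hde⟩ := a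
  obtain ⟨T, S, hTS, ⟨c, hc, hTd⟩, hSe⟩ := key_construction d e hd hde
  have hTS' : ∀ v w, bil (T.symm v) (S.symm w) = bil v w := by
    intro v w
    have := hTS (T.symm v) (S.symm w)
    rw [T.apply_symm_apply, S.apply_symm_apply] at this
    exact this.symm
  set f : HVtx k F → HVtx k F :=
    fun x => ⟨(normVec (T x.1.1), normVec (S x.1.2)), hmove T S hTS x.1 x.2⟩ with hf
  set g : HVtx k F → HVtx k F :=
    fun x => ⟨(normVec (T.symm x.1.1), normVec (S.symm x.1.2)),
      hmove T.symm S.symm hTS' x.1 x.2⟩ with hg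
  -- first components under f
  have hfval : ∀ x : HVtx k F, (f x).1 = (normVec (T x.1.1), normVec (S x.1.2)) :=
    fun x => rfl
  have hgval : ∀ x : HVtx k F,
      (g x).1 = (normVec (T.symm x.1.1), normVec (S.symm x.1.2)) := fun x => rfl
  have hgf : ∀ x, g (f x) = x := by
    rintro ⟨⟨v, w⟩, hv, hw, hb⟩
    apply Subtype.ext
    rw [hgval, hfval]
    have hv0 : v ≠ 0 := isNormal_ne_zero hv
    have hw0 : w ≠ 0 := isNormal_ne_zero hw
    have hTv0 : T v ≠ 0 := by rwa [Ne, LinearEquiv.map_eq_zero_iff]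
    have hSw0 : S w ≠ 0 := by rwa [Ne, LinearEquiv.map_eq_zero_iff]
    obtain ⟨c1, hc1, hn1⟩ := normVec_spec hTv0
    obtain ⟨c2, hc2, hn2⟩ := normVec_spec hSw0
    show ((normVec (T.symm (normVec (T v))), normVec (S.symm (normVec (S w))))
        : (Fin k → F) × (Fin k → F)) = (v, w)
    rw [hn1, hn2, map_smul, map_smul, T.symm_apply_apply, S.symm_apply_apply,
      normVec_smul hc1, normVec_smul hc2, normVec_of_isNormal hv,
      normVec_of_isNormal hw]
  have hfg : ∀ x, f (g x) = x := by
    rintro ⟨⟨v, w⟩, hv, hw, hb⟩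
    apply Subtype.ext
    rw [hfval, hgval]
    have hv0 : v ≠ 0 := isNormal_ne_zero hv
    have hw0 : w ≠ 0 := isNormal_ne_zero hw
    have hTv0 : T.symm v ≠ 0 := by rwa [Ne, LinearEquiv.map_eq_zero_iff]
    have hSw0 : S.symm w ≠ 0 := by rwa [Ne, LinearEquiv.map_eq_zero_iff]
    obtain ⟨c1, hc1, hn1⟩ := normVec_spec hTv0
    obtain ⟨c2, hc2, hn2⟩ := normVec_spec hSw0
    show ((normVec (T (normVec (T.symm v))), normVec (S (normVec (S.symm w))))
        : (Fin k → F) × (Fin k → F)) = (v, w)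
    rw [hn1, hn2, map_smul, map_smul, T.apply_symm_apply, S.apply_symm_apply,
      normVec_smul hc1, normVec_smul hc2, normVec_of_isNormal hv,
      normVec_of_isNormal hw]
  set φ : HVtx k F ≃ HVtx k F := ⟨f, g, hgf, hfg⟩ with hφ
  have hφinj : Function.Injective f := Function.LeftInverse.injective hgf
  have hconst : ∀ x y : HVtx k F, ∃ c0 : F, c0 ≠ 0 ∧
      bil (f x).1.1 (f y).1.2 = c0 * bil x.1.1 y.1.2 := by
    intro x y
    have hx0 : T x.1.1 ≠ 0 := by
      rw [Ne, LinearEquiv.map_eq_zero_iff]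
      exact isNormal_ne_zero x.2.1
    have hy0 : S y.1.2 ≠ 0 := by
      rw [Ne, LinearEquiv.map_eq_zero_iff]
      exact isNormal_ne_zero y.2.2.1
    obtain ⟨c1, hc1, hn1⟩ := normVec_spec hx0
    obtain ⟨c2, hc2, hn2⟩ := normVec_spec hy0
    refine ⟨c1 * c2, mul_ne_zero hc1 hc2, ?_⟩
    rw [hfval, hfval]
    show bil (normVec (T x.1.1)) (normVec (S y.1.2)) = _
    rw [hn1, hn2, bil_smul_left, bil_smul_right, hTS, mul_assoc]
  refine ⟨φ, ?_, ?_⟩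
  · intro x y
    obtain ⟨c0, hc0, hbil⟩ := hconst x y
    constructor
    · rintro ⟨hne, hb⟩
      exact ⟨fun hcon => hne (hφinj hcon), by
        show bil (f x).1.1 (f y).1.2 ≠ 0
        rw [hbil]; exact mul_ne_zero hc0 hb⟩
    · rintro ⟨hne, hb⟩
      refine ⟨fun hcon => hne (by rw [hcon]), ?_⟩
      intro hcon
      apply hb
      show bil (f x).1.1 (f y).1.2 = 0
      rw [hbil, hcon, mul_zero]
  · show (f ⟨(d, e), hd, he, hde⟩).1 = _
    rw [hfval]
    have he1 : IsNormal (fun i : Fin k => if (i : ℕ) = 0 then (1 : F) else 0) := by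
      refine ⟨⟨0, hk⟩, by simp, fun j hj => ?_⟩
      exact absurd hj (by simp [Fin.lt_def])
    show ((normVec (T d), normVec (S e)) : (Fin k → F) × (Fin k → F)) = _
    rw [hTd, hSe, normVec_smul hc, normVec_of_isNormal he1]
end

section
/- For every positive integer k and prime power q, the directional complement of H_k^q is vertex-transitive: for any two vertices u and v of the complement of H_k^q there exists an automorphism of the complement of H_k^q mapping u to v. -/
/-! `GL_k(F)` acts on the vertices by `g • (v, w) = (⟦g v⟧, ⟦w g⁻¹⟧)`, where `⟦x⟧` is the normal
vector on the line of `x`. Since `⟨g v, w g⁻¹⟩ = ⟨v, w⟩`, the action preserves the vertex condition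
and the non-edges `⟨v, w'⟩ = 0`, so every `g` is an automorphism of the complement. The action is
transitive: a matrix whose first row is `w` and whose other rows form a basis of `v^⊥` moves
`(v, w)` to `(e₀, e₀)`. -/

open Matrix

section Normal

variable {k : ℕ} {F : Type} [Field F]

lemma IsNormal.ne_zero {v : Fin k → F} (hv : IsNormal v) : v ≠ 0 := by
  obtain ⟨i, hi, -⟩ := hv
  rintro rfl
  exact zero_ne_one hi

lemma isNormal_single_zero {n : ℕ} : IsNormal (Pi.single 0 1 : Fin (n + 1) → F) :=
  ⟨0, Pi.single_eq_same _ _, fun j hj => absurd hj (Fin.not_lt_zero j)⟩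

lemma exists_smul_isNormal {v : Fin k → F} (hv : v ≠ 0) :
    ∃ c : F, c ≠ 0 ∧ IsNormal (c • v) := by
  obtain ⟨i, hi, hmin⟩ :=
    wellFounded_lt.has_min {i | v i ≠ 0} (by simpa [Set.Nonempty, funext_iff] using hv)
  refine ⟨(v i)⁻¹, inv_ne_zero hi, i, inv_mul_cancel₀ hi, fun j hj => ?_⟩
  simp [not_not.mp fun hj' => hmin j hj' hj]

lemma IsNormal.eq_one_of_isNormal_smul {u : Fin k → F} {c : F} (hu : IsNormal u)
    (hcu : IsNormal (c • u)) : c = 1 := by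
  obtain ⟨i, hi, hlt⟩ := hu
  obtain ⟨j, hj, hlt'⟩ := hcu
  simp only [Pi.smul_apply, smul_eq_mul] at hj hlt'
  rcases lt_trichotomy i j with hij | rfl | hji
  · simp [by simpa [hi] using hlt' i hij] at hj
  · simpa [hi] using hj
  · simp [hlt j hji] at hj

/-- The normal vector on the line of `v`; junk value `0` for `v = 0`. -/
noncomputable def normalRep (v : Fin k → F) : Fin k → F :=
  (Classical.epsilon fun c : F => c ≠ 0 ∧ IsNormal (c • v)) • v

lemma normalRep_eq_smul {v : Fin k → F} (hv : v ≠ 0) : ∃ c : F, c ≠ 0 ∧ normalRep v = c • v :=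
  ⟨_, (Classical.epsilon_spec (exists_smul_isNormal hv)).1, rfl⟩

lemma isNormal_normalRep {v : Fin k → F} (hv : v ≠ 0) : IsNormal (normalRep v) :=
  (Classical.epsilon_spec (exists_smul_isNormal hv)).2

lemma normalRep_smul_of_isNormal {v : Fin k → F} {c : F} (hv : IsNormal v) (hc : c ≠ 0) :
    normalRep (c • v) = v := by
  have hcv := smul_ne_zero hc hv.ne_zero
  have hnorm := isNormal_normalRep hcv
  obtain ⟨d, -, hd⟩ := normalRep_eq_smul hcv
  rw [hd, smul_smul] at hnorm ⊢
  rw [hv.eq_one_of_isNormal_smul hnorm, one_smul]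

lemma normalRep_of_isNormal {v : Fin k → F} (hv : IsNormal v) : normalRep v = v := by
  simpa using normalRep_smul_of_isNormal hv one_ne_zero

lemma normalRep_smul {c : F} (hc : c ≠ 0) (v : Fin k → F) : normalRep (c • v) = normalRep v := by
  rcases eq_or_ne v 0 with rfl | hv
  · rw [smul_zero]
  have hnorm := isNormal_normalRep hv
  obtain ⟨d, hd, hdv⟩ := normalRep_eq_smul hv
  rw [hdv] at hnorm ⊢
  rw [← normalRep_smul_of_isNormal hnorm (mul_ne_zero hc (inv_ne_zero hd)), smul_smul,
    mul_assoc, inv_mul_cancel₀ hd, mul_one]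

lemma bil_normalRep_eq_zero_iff {v w : Fin k → F} (hv : v ≠ 0) (hw : w ≠ 0) :
    bil (normalRep v) (normalRep w) = 0 ↔ bil v w = 0 := by
  obtain ⟨c, hc, hcv⟩ := normalRep_eq_smul hv
  obtain ⟨d, hd, hdw⟩ := normalRep_eq_smul hw
  simp only [hcv, hdw, bil, Pi.smul_apply, smul_eq_mul]
  simp_rw [mul_mul_mul_comm c, ← Finset.mul_sum, mul_eq_zero, hc, hd, false_or]

end Normal

section Action

variable {k : ℕ} {F : Type} [Field F]

lemma bil_mulVec_vecMul_inv (g : GL (Fin k) F) (v w : Fin k → F) :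
    bil ((g : Matrix (Fin k) (Fin k) F) *ᵥ v) (w ᵥ* ↑g⁻¹) = bil v w := by
  change (_ *ᵥ v) ⬝ᵥ _ = v ⬝ᵥ w
  rw [dotProduct_comm, dotProduct_mulVec, vecMul_vecMul, Units.inv_mul, vecMul_one,
    dotProduct_comm]

lemma mulVec_ne_zero (g : GL (Fin k) F) {v : Fin k → F} (hv : v ≠ 0) :
    (g : Matrix (Fin k) (Fin k) F) *ᵥ v ≠ 0 := by
  simpa using (mulVec_injective_iff_isUnit.2 g.isUnit).ne hv

lemma vecMul_ne_zero (g : GL (Fin k) F) {w : Fin k → F} (hw : w ≠ 0) :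
    w ᵥ* (g : Matrix (Fin k) (Fin k) F) ≠ 0 := by
  simpa using (vecMul_injective_iff_isUnit.2 g.isUnit).ne hw

lemma IsHVertex.smul (g : GL (Fin k) F) {p : (Fin k → F) × (Fin k → F)} (hp : IsHVertex p) :
    IsHVertex (normalRep ((g : Matrix (Fin k) (Fin k) F) *ᵥ p.1), normalRep (p.2 ᵥ* ↑g⁻¹)) := by
  obtain ⟨hv, hw, hvw⟩ := hp
  have hgv := mulVec_ne_zero g hv.ne_zero
  have hwg := vecMul_ne_zero g⁻¹ hw.ne_zero
  refine ⟨isNormal_normalRep hgv, isNormal_normalRep hwg, ?_⟩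
  rwa [Ne, bil_normalRep_eq_zero_iff hgv hwg, bil_mulVec_vecMul_inv]

noncomputable instance : SMul (GL (Fin k) F) (HVtx k F) := ⟨fun g p => ⟨_, p.2.smul g⟩⟩

lemma HVtx.smul_val (g : GL (Fin k) F) (p : HVtx k F) :
    (g • p).1 =
      (normalRep ((g : Matrix (Fin k) (Fin k) F) *ᵥ p.1.1), normalRep (p.1.2 ᵥ* ↑g⁻¹)) :=
  rfl

noncomputable instance : MulAction (GL (Fin k) F) (HVtx k F) where
  one_smul p := by
    ext1
    rw [HVtx.smul_val, inv_one, Units.val_one, one_mulVec, vecMul_one,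
      normalRep_of_isNormal p.2.1, normalRep_of_isNormal p.2.2.1]
  mul_smul g h p := by
    ext1
    obtain ⟨c, hc, hcv⟩ := normalRep_eq_smul (mulVec_ne_zero h p.2.1.ne_zero)
    obtain ⟨d, hd, hdw⟩ := normalRep_eq_smul (vecMul_ne_zero h⁻¹ p.2.2.1.ne_zero)
    rw [HVtx.smul_val, HVtx.smul_val, HVtx.smul_val, hcv, hdw, mulVec_smul, smul_vecMul,
      normalRep_smul hc, normalRep_smul hd, _root_.mul_inv_rev, Units.val_mul, Units.val_mul,
      mulVec_mulVec, vecMul_vecMul]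

end Action

section Transitivity

variable {F : Type} [Field F]

lemma exists_isUnit_row_zero_eq_of_dotProduct_ne_zero {n : ℕ} {v w : Fin (n + 1) → F}
    (hvw : v ⬝ᵥ w ≠ 0) :
    ∃ A : Matrix (Fin (n + 1)) (Fin (n + 1)) F,
      IsUnit A ∧ A 0 = w ∧ ∀ i : Fin n, v ⬝ᵥ A i.succ = 0 := by
  let f : Module.Dual F (Fin (n + 1) → F) := dotProductBilin F F v
  have hf : f ≠ 0 := fun h => hvw (LinearMap.congr_fun h w)
  have hrank : Module.finrank F (LinearMap.ker f) = n := by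
    have := f.finrank_ker_add_one_of_ne_zero hf
    rw [Module.finrank_fin_fun] at this
    omega
  obtain ⟨b⟩ : Nonempty (Module.Basis (Fin n) F (LinearMap.ker f)) :=
    ⟨Module.finBasisOfFinrankEq F _ hrank⟩
  let rows : Fin (n + 1) → Fin (n + 1) → F := Fin.cons w ((LinearMap.ker f).subtype ∘ b)
  refine ⟨of rows, ?_, rfl, fun i => (b i).2⟩
  have hspan : Submodule.span F (Set.range ((LinearMap.ker f).subtype ∘ b)) ≤ LinearMap.ker f :=
    Submodule.span_le.2 (Set.range_subset_iff.2 fun i => (b i).2)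
  rw [← linearIndependent_rows_iff_isUnit]
  exact linearIndependent_finCons.2
    ⟨b.linearIndependent.map' _ (LinearMap.ker f).ker_subtype, fun hw => hvw (hspan hw)⟩

lemma HVtx.exists_smul_val_eq_single {n : ℕ} (u : HVtx (n + 1) F) :
    ∃ g : GL (Fin (n + 1)) F, (g • u).1 = (Pi.single 0 1, Pi.single 0 1) := by
  obtain ⟨⟨v, w⟩, hu⟩ := u
  have hvw : v ⬝ᵥ w ≠ 0 := hu.2.2
  obtain ⟨A, hAunit, hA0, hAsucc⟩ := exists_isUnit_row_zero_eq_of_dotProduct_ne_zero hvw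
  have hAv : A *ᵥ v = (v ⬝ᵥ w) • Pi.single 0 1 := by
    ext i
    cases i using Fin.cases with
    | zero => simp [mulVec, hA0, dotProduct_comm]
    | succ i => simp [mulVec, dotProduct_comm, hAsucc i]
  let g : GL (Fin (n + 1)) F := hAunit.unit
  have hgw : Pi.single 0 1 ᵥ* (g : Matrix (Fin (n + 1)) (Fin (n + 1)) F) = w := by
    rw [single_one_vecMul]
    exact hA0
  have hwg : w ᵥ* (↑g⁻¹ : Matrix (Fin (n + 1)) (Fin (n + 1)) F) = Pi.single 0 1 := by
    rw [← hgw, vecMul_vecMul, Units.mul_inv, vecMul_one]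
  refine ⟨g, ?_⟩
  rw [HVtx.smul_val, IsUnit.unit_spec, hAv, hwg,
    normalRep_smul_of_isNormal isNormal_single_zero hvw, normalRep_of_isNormal isNormal_single_zero]

instance {k : ℕ} : MulAction.IsPretransitive (GL (Fin k) F) (HVtx k F) := by
  cases k with
  | zero => exact ⟨fun u _ => by obtain ⟨i, -⟩ := u.2.1; exact i.elim0⟩
  | succ n =>
    refine ⟨fun u v => ?_⟩
    obtain ⟨g, hg⟩ := u.exists_smul_val_eq_single
    obtain ⟨h, hh⟩ := v.exists_smul_val_eq_single
    exact ⟨h⁻¹ * g, by rw [mul_smul, inv_smul_eq_iff]; exact Subtype.ext (hg.trans hh.symm)⟩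

end Transitivity

section Complement

variable {k : ℕ} {F : Type} [Field F]

lemma digraphCompl_HAdj_iff (x y : HVtx k F) :
    digraphCompl HAdj x y ↔ x ≠ y ∧ bil x.1.1 y.1.2 = 0 := by
  unfold digraphCompl HAdj
  tauto

lemma bil_smul_eq_zero_iff (g : GL (Fin k) F) (x y : HVtx k F) :
    bil (g • x).1.1 (g • y).1.2 = 0 ↔ bil x.1.1 y.1.2 = 0 := by
  rw [HVtx.smul_val, HVtx.smul_val, bil_normalRep_eq_zero_iff (mulVec_ne_zero g x.2.1.ne_zero)
    (vecMul_ne_zero g⁻¹ y.2.2.1.ne_zero), bil_mulVec_vecMul_inv]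

lemma digraphCompl_HAdj_smul_iff (g : GL (Fin k) F) (x y : HVtx k F) :
    digraphCompl HAdj (g • x) (g • y) ↔ digraphCompl HAdj x y := by
  rw [digraphCompl_HAdj_iff, digraphCompl_HAdj_iff, (MulAction.injective g).ne_iff,
    bil_smul_eq_zero_iff]

end Complement

theorem Hkq_compl_vertexTransitive_general (k : ℕ)
    (F : Type) [Field F] (u v : HVtx k F) :
    ∃ φ : HVtx k F ≃ HVtx k F,
      (∀ x y : HVtx k F, digraphCompl HAdj x y ↔ digraphCompl HAdj (φ x) (φ y)) ∧
      φ u = v := by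
  obtain ⟨g, rfl⟩ := MulAction.exists_smul_eq (GL (Fin k) F) u v
  exact ⟨MulAction.toPerm g, fun x y => (digraphCompl_HAdj_smul_iff g x y).symm, rfl⟩

/-- For every positive integer `k` and prime power `q`, the directional complement of
`H_k^q` is vertex-transitive. -/
theorem Hkq_compl_vertexTransitive (q k : ℕ) (hq : IsPrimePow q) (hk : 0 < k)
    (F : Type) [Field F] [Fintype F] (hF : Fintype.card F = q) (u v : HVtx k F) :
    ∃ φ : HVtx k F ≃ HVtx k F,
      (∀ x y : HVtx k F, digraphCompl HAdj x y ↔ digraphCompl HAdj (φ x) (φ y)) ∧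
      φ u = v :=
  Hkq_compl_vertexTransitive_general k F u v
end

section
/- Let q be an odd prime power, k ≥ 2 an integer, and G a finite loopless digraph. If |G| / ω(G) > 4·(q^k − 1)·q / ((q² − 1)(q − 1)), then minrank_q(G) ≥ k + 1. Equivalently, lind_q(G) ≥ log_q(1 + ((q² − 1)(q − 1)/(4q)) · |G|/ω(G)). -/
/-!
Write a witnessing matrix of rank at most `k` as `M i j = u i (v j)` with `v j` in a
`k`-dimensional space `V` and `u i` linear forms on `V`. A colour is an independent pair
spanning a plane `P` together with a 2-colouring `A` of the points of `ℙ(V)`; vertex `i`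
accepts it if `v i ∈ P`, `A [v i] = false`, and `A` is `true` at the point of `P` where `u i`
vanishes. If `i` and `j` accept the same colour then `u i (v j) ≠ 0`, so every colour class is
a clique. For a fixed plane through `v i` a quarter of the colourings are accepted, and since
`GL(V)` is transitive on nonzero vectors, the planes through `v i` make up the fraction
`(q² - 1)/(q^k - 1)` of all of them. Double counting gives `n (q² - 1) ≤ 4 (q^k - 1) ω(G)`.
-/

/-- `minrank F G` of a loopless digraph `G` on `{1,…,n}` over a field `F`: the minimum
rank of an `n × n` matrix `M` over `F` with `M i i ≠ 0` for all `i` and `M i j = 0`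
whenever `i ≠ j` and `(i,j)` is not an edge of `G`. -/
noncomputable def minrank {n : ℕ} (F : Type) [Field F] (G : Fin n → Fin n → Prop) : ℕ :=
  sInf {r | ∃ M : Matrix (Fin n) (Fin n) F, (∀ i, M i i ≠ 0) ∧
    (∀ i j, i ≠ j → ¬ G i j → M i j = 0) ∧ M.rank = r}

/-- The clique number of a digraph: the maximum size of a set of vertices such that
between any two distinct vertices of the set there are directed edges in both
directions. -/
noncomputable def cliqueNumber {V : Type*} (G : V → V → Prop) : ℕ :=
  sSup {n | ∃ S : Set V, (∀ a ∈ S, ∀ b ∈ S, a ≠ b → G a b ∧ G b a) ∧ Nat.card S = n}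

open Module Submodule Set
open scoped LinearAlgebra.Projectivization

theorem four_mul_natCard_fun_bool_eq {α : Type*} [Finite α] {a b : α} (hab : a ≠ b)
    (x y : Bool) :
    4 * Nat.card {A : α → Bool // A a = x ∧ A b = y} = 2 ^ Nat.card α := by
  classical
  let e : {A : α → Bool // A a = x ∧ A b = y} ≃ (↥({a, b} : Set α)ᶜ → Bool) :=
    { toFun := fun A c => A.1 c
      invFun := fun g => ⟨fun c => if hca : c = a then x else if hcb : c = b then y
          else g ⟨c, by simp [hca, hcb]⟩, by simp [hab.symm]⟩
      left_inv := fun A => by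
        ext c
        by_cases hca : c = a
        · simp [hca, A.2.1]
        by_cases hcb : c = b
        · simp [hcb, hab.symm, A.2.2]
        simp [hca, hcb]
      right_inv := fun g => by
        ext ⟨c, hc⟩
        simp only [Set.mem_compl_iff, Set.mem_insert_iff, Set.mem_singleton_iff, not_or] at hc
        simp [hc.1, hc.2] }
  have hcard : Nat.card ↥({a, b} : Set α)ᶜ + 2 = Nat.card α := by
    rw [Nat.card_coe_set_eq, ← Set.ncard_pair hab, add_comm, Set.ncard_add_ncard_compl]
  rw [Nat.card_congr e, Nat.card_fun, Nat.card_eq_fintype_card (α := Bool), Fintype.card_bool,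
    ← hcard, pow_add]
  ring

variable {F V : Type*} [Field F] [AddCommGroup V] [Module F V]

theorem exists_linearEquiv_apply_eq [FiniteDimensional F V] {v w : V} (hv : v ≠ 0)
    (hw : w ≠ 0) : ∃ g : V ≃ₗ[F] V, g v = w := by
  obtain ⟨g, hg⟩ := exists_linearEquiv_restrict_eq
    ((LinearEquiv.toSpanNonzeroSingleton F V v hv).symm ≪≫ₗ
      LinearEquiv.toSpanNonzeroSingleton F V w hw)
  refine ⟨g, ?_⟩
  have h := hg ⟨v, mem_span_singleton_self v⟩
  rw [LinearEquiv.trans_apply, (LinearEquiv.symm_apply_eq _).mpr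
    (LinearEquiv.toSpanNonzeroSingleton_one F V v hv).symm,
    LinearEquiv.toSpanNonzeroSingleton_one] at h
  exact h.symm

theorem natCard_linearIndependent_mem_span_eq [FiniteDimensional F V] {ι : Type*} {v w : V}
    (hv : v ≠ 0) (hw : w ≠ 0) :
    Nat.card {s : ι → V // LinearIndependent F s ∧ v ∈ span F (range s)} =
      Nat.card {s : ι → V // LinearIndependent F s ∧ w ∈ span F (range s)} := by
  obtain ⟨g, rfl⟩ := exists_linearEquiv_apply_eq (F := F) hv hw
  refine Nat.card_congr (Equiv.subtypeEquiv (Equiv.piCongrRight fun _ => g.toEquiv) fun s => ?_)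
  change LinearIndependent F s ∧ v ∈ span F (range s) ↔
    LinearIndependent F (g ∘ s) ∧ g v ∈ span F (range (g ∘ s))
  rw [range_comp]
  exact and_congr (g.toLinearMap.linearIndependent_iff g.ker).symm
    (apply_mem_span_image_iff_mem_span (f := (g : V →ₗ[F] V)) g.injective).symm

theorem card_sub_one_mul_natCard_linearIndependent_mem_span [Fintype F] [Finite V]
    {ι : Type*} [Fintype ι] {v : V} (hv : v ≠ 0) :
    (Nat.card V - 1) * Nat.card {s : ι → V // LinearIndependent F s ∧ v ∈ span F (range s)} =
      Nat.card {s : ι → V // LinearIndependent F s} *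
        (Fintype.card F ^ Fintype.card ι - 1) := by
  classical
  have := Fintype.ofFinite V
  have := Fintype.ofFinite {s : ι → V // LinearIndependent F s}
  let e : (Σ s : {s : ι → V // LinearIndependent F s}, {x : span F (range s.1) // x ≠ 0}) ≃
      Σ w : {w : V // w ≠ 0},
        {s : ι → V // LinearIndependent F s ∧ w.1 ∈ span F (range s)} :=
    { toFun := fun p => ⟨⟨p.2.1, fun h => p.2.2 (Subtype.ext h)⟩, p.1.1, p.1.2, p.2.1.2⟩
      invFun := fun p =>
        ⟨⟨p.2.1, p.2.2.1⟩, ⟨p.1.1, p.2.2.2⟩, fun h => p.1.2 (congrArg Subtype.val h)⟩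
      left_inv := fun _ => rfl
      right_inv := fun _ => rfl }
  have h := Nat.card_congr e
  rw [Nat.card_sigma, Nat.card_sigma] at h
  have hplane (s : {s : ι → V // LinearIndependent F s}) :
      Nat.card {x : span F (range s.1) // x ≠ 0} = Fintype.card F ^ Fintype.card ι - 1 := by
    rw [Nat.card_eq_fintype_card]
    simp only [ne_eq, Fintype.card_subtype_compl, Fintype.card_unique]
    rw [← Nat.card_eq_fintype_card, natCard_eq_pow_finrank (K := F), finrank_span_eq_card s.2,
      Nat.card_eq_fintype_card]
  rw [Finset.sum_congr rfl fun s _ => hplane s,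
    Finset.sum_congr rfl fun w _ => natCard_linearIndependent_mem_span_eq w.2 hv] at h
  simp only [Finset.sum_const, Finset.card_univ, smul_eq_mul, ne_eq, Fintype.card_subtype_compl,
    Fintype.card_unique] at h
  rw [Nat.card_eq_fintype_card (α := V),
    Nat.card_eq_fintype_card (α := {s : ι → V // LinearIndependent F s}), h]

theorem Projectivization.mk_eq_mk_of_mem_ker_of_finrank_le_two [FiniteDimensional F V]
    {P : Submodule F V} (hP : finrank F P ≤ 2) {f : V →ₗ[F] F} {x y z : V} (hx : x ∈ P)
    (hy : y ∈ P) (hz : z ∈ P) (hfx : f x = 0) (hfy : f y = 0) (hfz : f z ≠ 0) (hx0 : x ≠ 0)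
    (hy0 : y ≠ 0) : mk F x hx0 = mk F y hy0 := by
  rw [mk_eq_mk_iff']
  by_contra! hxy
  have hind : LinearIndependent F ![y, x] := (LinearIndependent.pair_iff' hy0).mpr hxy
  have hspan : span F (range ![y, x]) = P := by
    refine eq_of_le_of_finrank_le (span_le.mpr ?_) ?_
    · simp [insert_subset_iff, hx, hy]
    · rw [finrank_span_eq_card hind, Fintype.card_fin]
      exact hP
  have hker : span F (range ![y, x]) ≤ LinearMap.ker f :=
    span_le.mpr (by simp [insert_subset_iff, hfx, hfy])
  exact hfz (hker (hspan ▸ hz))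

variable (F) in
def Accepts (P : Submodule F V) (A : ℙ F V → Bool) (u : V →ₗ[F] F) (v : V) : Prop :=
  v ∈ P ∧ (∀ hv : v ≠ 0, A (.mk F v hv) = false) ∧
    ∀ (y : V) (hy : y ≠ 0), y ∈ P → u y = 0 → A (.mk F y hy) = true

theorem Accepts.apply_ne_zero {P : Submodule F V} {A : ℙ F V → Bool} {u u' : V →ₗ[F] F}
    {v v' : V} (h : Accepts F P A u v) (h' : Accepts F P A u' v') (hv' : v' ≠ 0) : u v' ≠ 0 :=
  fun huv' => Bool.false_ne_true ((h'.2.1 hv').symm.trans (h.2.2 v' hv' h'.1 huv'))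

theorem four_mul_natCard_accepts [Finite V] {P : Submodule F V} (hP : finrank F P = 2)
    {u : V →ₗ[F] F} {v : V} (hv : v ∈ P) (huv : u v ≠ 0) :
    4 * Nat.card {A : ℙ F V → Bool // Accepts F P A u v} = 2 ^ Nat.card (ℙ F V) := by
  have hv0 : v ≠ 0 := fun h => huv (h ▸ map_zero u)
  obtain ⟨⟨y, hyP⟩, hyker, hy0⟩ := exists_mem_ne_zero_of_ne_bot
    (LinearMap.ker_ne_bot_of_finrank_lt (f := u.domRestrict P) (by simp [hP]))
  replace hyker : u y = 0 := hyker
  replace hy0 : y ≠ 0 := fun h => hy0 (Subtype.ext h)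
  have hne : Projectivization.mk F v hv0 ≠ .mk F y hy0 := by
    rw [Ne, Projectivization.mk_eq_mk_iff']
    rintro ⟨a, rfl⟩
    exact huv (by rw [map_smul, hyker, smul_zero])
  rw [← four_mul_natCard_fun_bool_eq hne false true]
  congr 1
  refine Nat.card_congr (Equiv.subtypeEquivRight fun A => ⟨?_, ?_⟩)
  · rintro ⟨-, hAv, hAker⟩
    exact ⟨hAv hv0, hAker y hy0 hyP hyker⟩
  · rintro ⟨hAv, hAy⟩
    refine ⟨hv, fun _ => hAv, fun z hz0 hzP hz => ?_⟩
    rwa [Projectivization.mk_eq_mk_of_mem_ker_of_finrank_le_two hP.le hzP hyP hv hz hyker huv]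

theorem four_mul_natCard_accepts_span [Finite V] {u : V →ₗ[F] F} {v : V} (huv : u v ≠ 0) :
    4 * Nat.card {c : {s : Fin 2 → V // LinearIndependent F s} × (ℙ F V → Bool) //
        Accepts F (span F (range c.1.1)) c.2 u v} =
      Nat.card {s : Fin 2 → V // LinearIndependent F s ∧ v ∈ span F (range s)} *
        2 ^ Nat.card (ℙ F V) := by
  classical
  have := Fintype.ofFinite {s : Fin 2 → V // LinearIndependent F s}
  have hplane (s : {s : Fin 2 → V // LinearIndependent F s}) :
      4 * Nat.card {A : ℙ F V → Bool // Accepts F (span F (range s.1)) A u v} =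
        if v ∈ span F (range s.1) then 2 ^ Nat.card (ℙ F V) else 0 := by
    split_ifs with hv
    · exact four_mul_natCard_accepts (by rw [finrank_span_eq_card s.2, Fintype.card_fin]) hv huv
    · rw [Nat.card_eq_zero.mpr (.inl ⟨fun A => hv A.2.1⟩), mul_zero]
  rw [Nat.card_congr (Equiv.subtypeProdEquivSigmaSubtype fun (s : {s : Fin 2 → V // _}) A =>
      Accepts F (span F (range s.1)) A u v), Nat.card_sigma,
    Finset.mul_sum, Finset.sum_congr rfl fun s _ => hplane s, Finset.sum_ite,
    Finset.sum_const_zero, add_zero, Finset.sum_const, smul_eq_mul,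
    ← Nat.card_congr (Equiv.subtypeSubtypeEquivSubtypeInter _ _)]
  congr 1
  rw [Nat.card_eq_fintype_card, Fintype.card_subtype]

theorem card_le_cliqueNumber {W : Type*} [Finite W] {G : W → W → Prop} {S : Finset W}
    (hS : ∀ a ∈ S, ∀ b ∈ S, a ≠ b → G a b ∧ G b a) : S.card ≤ cliqueNumber G := by
  refine le_csSup ⟨Nat.card W, ?_⟩ ⟨S, hS, Nat.card_eq_finsetCard S⟩
  rintro m ⟨T, -, rfl⟩
  exact Nat.card_le_card_of_injective _ Subtype.val_injective

theorem card_mul_le_four_mul_cliqueNumber [Fintype F] [Finite V] (hV : 2 ≤ finrank F V)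
    {ι : Type*} [Fintype ι] (G : ι → ι → Prop) (u : ι → V →ₗ[F] F) (v : ι → V)
    (hdiag : ∀ i, u i (v i) ≠ 0) (hzero : ∀ i j, i ≠ j → ¬ G i j → u i (v j) = 0) :
    Fintype.card ι * (Fintype.card F ^ 2 - 1) ≤ 4 * (Nat.card V - 1) * cliqueNumber G := by
  classical
  let Colour := {s : Fin 2 → V // LinearIndependent F s} × (ℙ F V → Bool)
  have := Fintype.ofFinite Colour
  let R (i : ι) (c : Colour) : Prop := Accepts F (span F (range c.1.1)) c.2 (u i) (v i)
  set N := Nat.card (ℙ F V)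
  set I := Nat.card {s : Fin 2 → V // LinearIndependent F s}
  have hI : 0 < I :=
    have : Nonempty {s : Fin 2 → V // LinearIndependent F s} :=
      ⟨⟨_, (Module.finBasis F V).linearIndependent.comp _ (Fin.castLE_injective hV)⟩⟩
    Nat.card_pos
  have hv (i : ι) : v i ≠ 0 := fun h => hdiag i (h ▸ map_zero _)
  have hvertex (i : ι) : (Nat.card V - 1) * (4 * (Finset.univ.filter (R i)).card) =
      I * (Fintype.card F ^ 2 - 1) * 2 ^ N := by
    rw [← Fintype.card_subtype, ← Nat.card_eq_fintype_card,
      four_mul_natCard_accepts_span (hdiag i), ← mul_assoc,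
      card_sub_one_mul_natCard_linearIndependent_mem_span (hv i), Fintype.card_fin]
  have hcolour (c : Colour) : (Finset.univ.filter fun i => R i c).card ≤ cliqueNumber G :=
    card_le_cliqueNumber fun i hi j hj hij => by
      simp only [Finset.mem_filter, Finset.mem_univ, true_and] at hi hj
      exact ⟨not_not.mp fun hG => hi.apply_ne_zero hj (hv j) (hzero i j hij hG),
        not_not.mp fun hG => hj.apply_ne_zero hi (hv i) (hzero j i hij.symm hG)⟩
  have hdouble : ∑ i, (Finset.univ.filter (R i)).card =
      ∑ c, (Finset.univ.filter fun i => R i c).card := by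
    simp only [Finset.card_filter]
    exact Finset.sum_comm
  have hcolours : Fintype.card Colour = I * 2 ^ N := by
    rw [← Nat.card_eq_fintype_card, Nat.card_prod, Nat.card_fun,
      Nat.card_eq_fintype_card (α := Bool), Fintype.card_bool]
  refine Nat.le_of_mul_le_mul_right ?_ (Nat.mul_pos hI (Nat.two_pow_pos N))
  calc Fintype.card ι * (Fintype.card F ^ 2 - 1) * (I * 2 ^ N)
      = ∑ i, (Nat.card V - 1) * (4 * (Finset.univ.filter (R i)).card) := by
        rw [Finset.sum_congr rfl fun i _ => hvertex i, Finset.sum_const, Finset.card_univ,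
          smul_eq_mul]
        ring
    _ = (Nat.card V - 1) * 4 * ∑ c, (Finset.univ.filter fun i => R i c).card := by
        rw [← hdouble, Finset.mul_sum]
        simp only [mul_assoc]
    _ ≤ (Nat.card V - 1) * 4 * (Fintype.card Colour * cliqueNumber G) :=
        Nat.mul_le_mul_left _ (Finset.sum_le_card_nsmul _ _ _ fun c _ => hcolour c)
    _ = 4 * (Nat.card V - 1) * cliqueNumber G * (I * 2 ^ N) := by
        rw [hcolours]
        ring

theorem card_mul_le_of_rank_le [Fintype F] {ι : Type*} [Fintype ι] [DecidableEq ι] {k : ℕ}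
    (hk : 2 ≤ k) (G : ι → ι → Prop) (M : Matrix ι ι F) (hdiag : ∀ i, M i i ≠ 0)
    (hzero : ∀ i j, i ≠ j → ¬ G i j → M i j = 0) (hrank : M.rank ≤ k) :
    Fintype.card ι * (Fintype.card F ^ 2 - 1) ≤
      4 * (Fintype.card F ^ k - 1) * cliqueNumber G := by
  let W := LinearMap.range M.mulVecLin
  -- padding the column space to dimension exactly `k` gives `2 ≤ finrank` and `q ^ k` vectors
  have hV : finrank F (W × (Fin (k - M.rank) → F)) = k := by
    rw [finrank_prod, finrank_fin_fun]
    exact Nat.add_sub_cancel' hrank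
  have hentry (i j : ι) : ((LinearMap.proj i ∘ₗ W.subtype) ∘ₗ LinearMap.fst F W _)
      (M.mulVecLin.rangeRestrict (Pi.single j 1), (0 : Fin (k - M.rank) → F)) = M i j := by
    simp
  have h := card_mul_le_four_mul_cliqueNumber (hV ▸ hk) G
    (fun i => (LinearMap.proj i ∘ₗ W.subtype) ∘ₗ LinearMap.fst F W _)
    (fun j => (M.mulVecLin.rangeRestrict (Pi.single j 1), 0))
    (fun i => hentry i i ▸ hdiag i) (fun i j hij hG => (hentry i j).trans (hzero i j hij hG))
  rwa [natCard_eq_pow_finrank (K := F), hV, Nat.card_eq_fintype_card] at h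

theorem minrank_ge_of_cliqueNumber_general (q k n : ℕ)
    (hk : 2 ≤ k) (F : Type) [Field F] [Fintype F] (hF : Fintype.card F = q)
    (G : Fin n → Fin n → Prop)
    (hineq : cliqueNumber G * (4 * (q ^ k - 1) * q) <
      n * ((q ^ 2 - 1) * (q - 1))) :
    k + 1 ≤ minrank F G := by
  refine le_csInf ⟨_, 1, fun i => by simp, fun i j hij _ => Matrix.one_apply_ne hij, rfl⟩ ?_
  rintro r ⟨M, hdiag, hzero, rfl⟩
  by_contra! hr
  have hbound := card_mul_le_of_rank_le hk G M hdiag hzero (by omega)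
  rw [Fintype.card_fin, hF] at hbound
  refine hineq.not_ge ?_
  calc n * ((q ^ 2 - 1) * (q - 1))
      = n * (q ^ 2 - 1) * (q - 1) := by ring
    _ ≤ 4 * (q ^ k - 1) * cliqueNumber G * q := Nat.mul_le_mul hbound (Nat.sub_le q 1)
    _ = cliqueNumber G * (4 * (q ^ k - 1) * q) := by ring

/-- Let `q` be an odd prime power, `k ≥ 2`, and `G` a finite loopless digraph on `n`
vertices.  If `|G| / ω(G) > 4 (q^k - 1) q / ((q² - 1)(q - 1))` (stated
cross-multiplied), then `minrank_q(G) ≥ k + 1`. -/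
theorem minrank_ge_of_cliqueNumber (q k n : ℕ) (hq : IsPrimePow q) (hodd : Odd q)
    (hk : 2 ≤ k) (F : Type) [Field F] [Fintype F] (hF : Fintype.card F = q)
    (G : Fin n → Fin n → Prop) (hloopless : ∀ i, ¬ G i i)
    (hineq : cliqueNumber G * (4 * (q ^ k - 1) * q) <
      n * ((q ^ 2 - 1) * (q - 1))) :
    k + 1 ≤ minrank F G :=
  minrank_ge_of_cliqueNumber_general q k n hk F hF G hineq
end

section
/- Let q be an odd prime power, k a positive integer, l an integer with 1 < l < k − 1, and G a finite loopless digraph with minrank_q(G) ≤ k. Then |G| / N(Ḡ, K_l) ≤ 4·q^l·(q^k − 1) / ((q² − 1)(q^l − 1)). Equivalently, lind_q(G) ≥ log_q(1 + ((q² − 1)(q^l − 1)/(4q^l)) · |G| / N(Ḡ, K_l)). -/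
/-- `Nhom L K` is the maximum number of vertices of an induced subdigraph `L'` of `L`
(given by a subset `S` of the vertices of `L` with the restricted adjacency) such that
there exists a homomorphism from `L'` to `K`. -/
noncomputable def Nhom {VL VK : Type*} (L : VL → VL → Prop) (K : VK → VK → Prop) : ℕ :=
  sSup {n | ∃ S : Set VL,
    (∃ f : S → VK, ∀ x y : S, L x.val y.val → K (f x) (f y)) ∧ Nat.card S = n}

open Finset Module
open scoped Classical

lemma card_le_Nhom {VL VK : Type*} [Finite VL] {L : VL → VL → Prop} {K : VK → VK → Prop}
    (S : Set VL) (f : S → VK) (hf : ∀ x y : S, L x y → K (f x) (f y)) :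
    Nat.card S ≤ Nhom L K :=
  le_csSup ⟨Nat.card VL, by rintro _ ⟨T, -, rfl⟩; exact Finite.card_subtype_le _⟩
    ⟨S, ⟨f, hf⟩, rfl⟩

lemma card_le_Nhom_of_bool_coloring {V : Type*} [Finite V] (L : V → V → Prop) {l : ℕ}
    (hl : 2 ≤ l) (S : Finset V) (c : V → Bool) (hc : ∀ i ∈ S, ∀ j ∈ S, L i j → c i ≠ c j) :
    #S ≤ Nhom L (fun a b : Fin l ↦ a ≠ b) := by
  have := card_le_Nhom (S : Set V) (fun x ↦ Fin.castLE hl (finTwoEquiv.symm (c x)))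
    fun x y hxy ↦ (Fin.castLE_injective hl).ne
      (finTwoEquiv.symm.injective.ne (hc x x.2 y y.2 hxy))
  simpa using this

lemma exists_matrix_of_minrank_le {n k : ℕ} {F : Type} [Field F] {G : Fin n → Fin n → Prop}
    (h : minrank F G ≤ k) :
    ∃ M : Matrix (Fin n) (Fin n) F, (∀ i, M i i ≠ 0) ∧
      (∀ i j, i ≠ j → ¬ G i j → M i j = 0) ∧ M.rank ≤ k := by
  obtain ⟨M, hdiag, hzero, hrank⟩ := Nat.sInf_mem (s := {r | ∃ M : Matrix (Fin n) (Fin n) F,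
      (∀ i, M i i ≠ 0) ∧ (∀ i j, i ≠ j → ¬ G i j → M i j = 0) ∧ M.rank = r})
    ⟨_, 1, fun i ↦ by simp, fun i j hij _ ↦ Matrix.one_apply_ne hij, rfl⟩
  exact ⟨M, hdiag, hzero, hrank ▸ h⟩

-- The column space `V` of `M` has dimension `M.rank ≤ k`, so `V × F^(k - M.rank) ≃ F^k`.
lemma Matrix.exists_dual_pairing_eq_of_rank_le {m n : Type*} [Fintype n] {F : Type*}
    [Field F] {k : ℕ} (M : Matrix m n F) (h : M.rank ≤ k) :
    ∃ (b : n → Fin k → F) (φ : m → Dual F (Fin k → F)), ∀ i j, φ i (b j) = M i j := by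
  set V := LinearMap.range M.mulVecLin
  have hV : finrank F (V × (Fin (k - finrank F V) → F)) = finrank F (Fin k → F) := by
    rw [finrank_prod, finrank_fin_fun, finrank_fin_fun]
    exact Nat.add_sub_of_le h
  let e := LinearEquiv.ofFinrankEq _ _ hV
  have hcol : ∀ j, M.col j ∈ V := fun j ↦ ⟨Pi.single j 1, M.mulVec_single_one j⟩
  refine ⟨fun j ↦ e (⟨M.col j, hcol j⟩, 0),
    fun i ↦ LinearMap.proj i ∘ₗ V.subtype ∘ₗ LinearMap.fst F V _ ∘ₗ e.symm.toLinearMap,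
    fun i j ↦ by simp⟩

lemma two_mul_card_apply_ne {α : Type*} [Fintype α] {a c : α} (h : a ≠ c) :
    2 * #{g : α → Bool | g a ≠ g c} = Fintype.card (α → Bool) := by
  let flip : (α → Bool) → (α → Bool) := fun g ↦ Function.update g a (!g a)
  have hflip_eq : ∀ g, flip g a = flip g c ↔ g a ≠ g c := fun g ↦ by
    simp only [flip, Function.update_self, Function.update_of_ne h.symm]
    generalize g a = x; generalize g c = y
    cases x <;> cases y <;> decide
  have hflip : ∀ g, flip (flip g) = g := fun g ↦ by simp [flip]
  have heq : #{g : α → Bool | ¬g a ≠ g c} = #{g : α → Bool | g a ≠ g c} :=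
    card_nbij' flip flip (fun g hg ↦ by simpa [hflip_eq] using hg)
      (fun g hg ↦ by simpa [hflip_eq] using hg) (fun g _ ↦ hflip g) (fun g _ ↦ hflip g)
  have hsplit := card_filter_add_card_filter_not (s := univ) (fun g : α → Bool ↦ g a ≠ g c)
  rw [card_univ, heq] at hsplit
  omega

lemma exists_bool_coloring_card_le_two_mul {α ι : Type*} [Fintype α] (s : Finset ι)
    (x y : ι → α) (hxy : ∀ i ∈ s, x i ≠ y i) :
    ∃ g : α → Bool, #s ≤ 2 * #{i ∈ s | g (x i) ≠ g (y i)} := by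
  have hswap := sum_card_bipartiteAbove_eq_sum_card_bipartiteBelow (s := s)
    (t := (univ : Finset (α → Bool))) (fun i g ↦ g (x i) ≠ g (y i))
  simp only [bipartiteAbove, bipartiteBelow] at hswap
  have hsum : ∑ _g : α → Bool, #s ≤ ∑ g : α → Bool, 2 * #{i ∈ s | g (x i) ≠ g (y i)} := by
    rw [← mul_sum, ← hswap, mul_sum, sum_const, card_univ, smul_eq_mul, mul_comm, ← smul_eq_mul,
      ← sum_const]
    exact (sum_congr rfl fun i hi ↦ (two_mul_card_apply_ne (hxy i hi)).symm).le
  obtain ⟨g, -, hg⟩ := exists_le_of_sum_le univ_nonempty hsum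
  exact ⟨g, hg⟩

section Planes

variable {F V : Type*} [Field F] [AddCommGroup V] [Module F V]

lemma Submodule.finrank_span_singleton_sup_span_singleton [Module.Finite F V] {u v : V}
    (hv : v ≠ 0) (hu : u ∉ F ∙ v) : finrank F ↥((F ∙ v) ⊔ (F ∙ u)) = 2 := by
  rw [Submodule.finrank_sup_span_singleton hu, finrank_span_singleton hv]

lemma Submodule.span_singleton_sup_span_singleton_eq [Module.Finite F V] {W : Submodule F V}
    (hW : finrank F W = 2) {u v : V} (hv : v ≠ 0) (hvW : v ∈ W) (huW : u ∈ W) (hu : u ∉ F ∙ v) :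
    (F ∙ v) ⊔ (F ∙ u) = W :=
  Submodule.eq_of_le_of_finrank_le
    (sup_le ((Submodule.span_singleton_le_iff_mem _ _).2 hvW)
      ((Submodule.span_singleton_le_iff_mem _ _).2 huW))
    (by rw [hW, finrank_span_singleton_sup_span_singleton hv hu])

lemma Submodule.span_singleton_eq_inf_ker [Module.Finite F V] {W : Submodule F V}
    (hW : finrank F W = 2) (f : Dual F V) {v w : V} (hvW : v ∈ W) (hv : f v ≠ 0) (hwW : w ∈ W)
    (hw : w ≠ 0) (hfw : f w = 0) : F ∙ w = W ⊓ LinearMap.ker f := by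
  have hlt : W ⊓ LinearMap.ker f < W :=
    inf_le_left.lt_of_ne fun h ↦ hv (by rw [← h] at hvW; exact hvW.2)
  refine Submodule.eq_of_le_of_finrank_le
    ((Submodule.span_singleton_le_iff_mem _ _).2 ⟨hwW, hfw⟩) ?_
  have := Submodule.finrank_lt_finrank_of_lt hlt
  rw [finrank_span_singleton hw]
  omega

lemma exists_separating_coloring_of_plane [Fintype (Submodule F V)] [Module.Finite F V]
    {ι : Type*} [Fintype ι] (b : ι → V) (φ : ι → Dual F V)
    (hφb : ∀ i, φ i (b i) ≠ 0) {W : Submodule F V} (hW : finrank F W = 2) :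
    ∃ (S : Finset ι) (c : ι → Bool), (∀ i ∈ S, ∀ j ∈ S, φ i (b j) = 0 → c i ≠ c j) ∧
      #{i | b i ∈ W} ≤ 2 * #S := by
  have hb : ∀ i, b i ≠ 0 := fun i h ↦ hφb i (by rw [h, map_zero])
  have hline : ∀ i ∈ ({i | b i ∈ W} : Finset ι), W ⊓ LinearMap.ker (φ i) ≠ F ∙ b i :=
    fun i _ h ↦ hφb i (h.symm ▸ Submodule.mem_span_singleton_self (b i) : b i ∈ W ⊓ _).2
  obtain ⟨g, hg⟩ := exists_bool_coloring_card_le_two_mul _ _ _ hline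
  refine ⟨_, fun i ↦ g (F ∙ b i), fun i hi j hj hij ↦ ?_, hg⟩
  simp only [mem_filter, mem_univ, true_and] at hi hj
  show g (F ∙ b i) ≠ g (F ∙ b j)
  rw [Submodule.span_singleton_eq_inf_ker hW (φ i) hi.1 (hφb i) hj.1 (hb j) hij]
  exact hi.2.symm

variable (F V) in
noncomputable def planes [Fintype (Submodule F V)] : Finset (Submodule F V) :=
  {W | finrank F W = 2}

@[simp]
lemma mem_planes [Fintype (Submodule F V)] {W : Submodule F V} :
    W ∈ planes F V ↔ finrank F W = 2 := by
  simp [planes]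

variable [Fintype F] [Fintype V]

lemma card_filter_mem_submodule (W : Submodule F V) :
    #{v : V | v ∈ W} = Fintype.card F ^ finrank F W := by
  rw [← Module.card_eq_pow_finrank, Fintype.card_subtype]

lemma card_filter_mem_and_notMem_span_singleton {W : Submodule F V} {v : V} (hv : v ≠ 0)
    (hvW : v ∈ W) :
    #{u : V | u ∈ W ∧ u ∉ F ∙ v} = Fintype.card F ^ finrank F W - Fintype.card F := by
  have hsub : ({u | u ∈ F ∙ v} : Finset V) ⊆ ({u | u ∈ W} : Finset V) :=
    monotone_filter_right _ fun _ _ hu ↦ (Submodule.span_singleton_le_iff_mem _ _).2 hvW hu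
  have hdiff : ({u | u ∈ W ∧ u ∉ F ∙ v} : Finset V) =
      ({u | u ∈ W} : Finset V) \ ({u | u ∈ F ∙ v} : Finset V) := by
    ext; simp
  rw [hdiff, card_sdiff_of_subset hsub, card_filter_mem_submodule, card_filter_mem_submodule,
    finrank_span_singleton hv, pow_one]

-- Each plane through `v` is `F ∙ v ⊔ F ∙ u` for exactly `q² - q` vectors `u`.
lemma card_planes_mem_mul [Fintype (Submodule F V)] {v : V} (hv : v ≠ 0) :
    #{W ∈ planes F V | v ∈ W} * (Fintype.card F ^ 2 - Fintype.card F) =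
      Fintype.card F ^ finrank F V - Fintype.card F := by
  have hmaps : ∀ u ∈ ({u | u ∈ (⊤ : Submodule F V) ∧ u ∉ F ∙ v} : Finset V),
      (F ∙ v) ⊔ (F ∙ u) ∈ {W ∈ planes F V | v ∈ W} := by
    intro u hu
    simp only [mem_filter, mem_univ, true_and, mem_planes] at hu ⊢
    exact ⟨Submodule.finrank_span_singleton_sup_span_singleton hv hu.2,
      Submodule.mem_sup_left (Submodule.mem_span_singleton_self v)⟩
  have hfiber : ∀ W ∈ {W ∈ planes F V | v ∈ W},
      #{u ∈ ({u | u ∈ (⊤ : Submodule F V) ∧ u ∉ F ∙ v} : Finset V) | (F ∙ v) ⊔ (F ∙ u) = W} =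
        Fintype.card F ^ 2 - Fintype.card F := by
    intro W hW
    simp only [mem_filter, mem_planes] at hW
    rw [← hW.1, ← card_filter_mem_and_notMem_span_singleton hv hW.2]
    congr 1
    ext u
    simp only [mem_filter, mem_univ, true_and, Submodule.mem_top]
    constructor
    · rintro ⟨hu, rfl⟩
      exact ⟨Submodule.mem_sup_right (Submodule.mem_span_singleton_self u), hu⟩
    · rintro ⟨huW, hu⟩
      exact ⟨hu, Submodule.span_singleton_sup_span_singleton_eq hW.1 hv hW.2 huW hu⟩
  rw [← finrank_top F V, ← card_filter_mem_and_notMem_span_singleton hv Submodule.mem_top,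
    card_eq_sum_card_fiberwise hmaps, sum_congr rfl hfiber, sum_const, smul_eq_mul]

lemma sum_card_mem_planes_mul [Fintype (Submodule F V)] {ι : Type*} (s : Finset ι) (b : ι → V)
    (hb : ∀ i ∈ s, b i ≠ 0) :
    (∑ W ∈ planes F V, #{i ∈ s | b i ∈ W}) * (Fintype.card F ^ 2 - Fintype.card F) =
      #s * (Fintype.card F ^ finrank F V - Fintype.card F) := by
  have hswap := sum_card_bipartiteAbove_eq_sum_card_bipartiteBelow (s := s)
    (t := planes F V) (fun i W ↦ b i ∈ W)
  simp only [bipartiteAbove, bipartiteBelow] at hswap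
  rw [← hswap, sum_mul, ← smul_eq_mul, ← sum_const]
  exact sum_congr rfl fun i hi ↦ card_planes_mem_mul (hb i hi)

lemma exists_plane_card_mem_ge [Fintype (Submodule F V)] {ι : Type*} [Fintype ι] (b : ι → V)
    (hb : ∀ i, b i ≠ 0) (hV : 2 ≤ finrank F V) :
    ∃ W : Submodule F V, finrank F W = 2 ∧
      Fintype.card ι * (Fintype.card F ^ 2 - 1) ≤
        (Fintype.card F ^ finrank F V - 1) * #{i | b i ∈ W} := by
  set q := Fintype.card F
  set r := finrank F V
  have hq : 1 < q := Fintype.one_lt_card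
  have hqr : q < q ^ r := lt_self_pow₀ hq hV
  have hq2 : q < q ^ 2 := lt_self_pow₀ hq one_lt_two
  have hpoints := sum_card_mem_planes_mul (F := F) univ b (fun i _ ↦ hb i)
  have hnonzero := sum_card_mem_planes_mul (F := F) ({v | v ≠ 0} : Finset V) id
    (fun v hv ↦ by simpa using hv)
  have hcard_nonzero : #({v | v ≠ 0} : Finset V) = q ^ r - 1 := by
    rw [filter_ne', card_erase_of_mem (mem_univ (0 : V)), card_univ, Module.card_eq_pow_finrank (K := F)]
  have hplane : ∀ W ∈ planes F V, #{v ∈ ({v | v ≠ 0} : Finset V) | id v ∈ W} = q ^ 2 - 1 := by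
    intro W hW
    have hW0 : {v ∈ ({v | v ≠ 0} : Finset V) | id v ∈ W} = ({v | v ∈ W} : Finset V).erase 0 := by
      ext; simp [and_comm]
    rw [hW0, card_erase_of_mem (by simp), card_filter_mem_submodule, mem_planes.1 hW]
  rw [sum_congr rfl hplane, hcard_nonzero] at hnonzero
  -- Counted with weight `q² - q`, the incidences of the `b i` with planes number `|ι| (q^r - q)`
  -- and those of the nonzero vectors `(q^r - 1)(q^r - q)`, so the averages agree.
  have hsum : ∑ W ∈ planes F V, Fintype.card ι * (q ^ 2 - 1) =
      ∑ W ∈ planes F V, (q ^ r - 1) * #{i | b i ∈ W} := by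
    apply Nat.eq_of_mul_eq_mul_right (Nat.sub_pos_of_lt hq2)
    rw [← mul_sum, ← mul_sum, mul_assoc, hnonzero, mul_assoc, hpoints, card_univ]
    ring
  have hne : (planes F V).Nonempty := by
    by_contra hempty
    rw [not_nonempty_iff_eq_empty.1 hempty, sum_empty, zero_mul] at hnonzero
    exact (Nat.mul_pos (by omega) (Nat.sub_pos_of_lt hqr)).ne hnonzero
  obtain ⟨W, hW, hle⟩ := exists_le_of_sum_le hne hsum.le
  exact ⟨W, mem_planes.1 hW, hle⟩

lemma exists_large_separating_coloring {ι : Type*} [Fintype ι] (b : ι → V)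
    (φ : ι → Dual F V) (hφb : ∀ i, φ i (b i) ≠ 0) (hV : 2 ≤ finrank F V) :
    ∃ (S : Finset ι) (c : ι → Bool), (∀ i ∈ S, ∀ j ∈ S, φ i (b j) = 0 → c i ≠ c j) ∧
      Fintype.card ι * (Fintype.card F ^ 2 - 1) ≤
        (Fintype.card F ^ finrank F V - 1) * (2 * #S) := by
  have := Fintype.ofFinite (Submodule F V)
  have hb : ∀ i, b i ≠ 0 := fun i h ↦ hφb i (by rw [h, map_zero])
  obtain ⟨W, hW, hcardW⟩ := exists_plane_card_mem_ge b hb hV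
  obtain ⟨S, c, hsep, hS⟩ := exists_separating_coloring_of_plane b φ hφb hW
  exact ⟨S, c, hsep, hcardW.trans (Nat.mul_le_mul_left _ hS)⟩

end Planes

theorem Nhom_ratio_of_minrank_le_general (q k l n : ℕ) (hl : 1 < l) (hlk : l < k - 1)
    (F : Type) [Field F] [Fintype F] (hF : Fintype.card F = q)
    (G : Fin n → Fin n → Prop)
    (hmr : minrank F G ≤ k) :
    n * ((q ^ 2 - 1) * (q ^ l - 1)) ≤
      Nhom (digraphCompl G) (fun a b : Fin l => a ≠ b) * (4 * q ^ l * (q ^ k - 1)) := by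
  obtain ⟨M, hdiag, hzero, hrank⟩ := exists_matrix_of_minrank_le hmr
  obtain ⟨b, φ, hM⟩ := M.exists_dual_pairing_eq_of_rank_le hrank
  obtain ⟨S, c, hsep, hS⟩ := exists_large_separating_coloring b φ
    (fun i ↦ hM i i ▸ hdiag i) (by rw [finrank_fin_fun]; omega)
  have hSN := card_le_Nhom_of_bool_coloring (digraphCompl G) hl S c
    fun i hi j hj hij ↦ hsep i hi j hj (hM i j ▸ hzero i j hij.1 hij.2)
  set N := Nhom (digraphCompl G) (fun a b : Fin l => a ≠ b)
  rw [finrank_fin_fun, Fintype.card_fin, hF] at hS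
  calc n * ((q ^ 2 - 1) * (q ^ l - 1))
      = n * (q ^ 2 - 1) * (q ^ l - 1) := by ring
    _ ≤ (q ^ k - 1) * (2 * N) * (q ^ l - 1) :=
        Nat.mul_le_mul_right _ (hS.trans (by gcongr))
    _ = N * (2 * (q ^ l - 1)) * (q ^ k - 1) := by ring
    _ ≤ N * (4 * q ^ l) * (q ^ k - 1) :=
        Nat.mul_le_mul_right _ (Nat.mul_le_mul_left _ (by omega))
    _ = N * (4 * q ^ l * (q ^ k - 1)) := by ring

/-- Let `q` be an odd prime power, `k` a positive integer, `1 < l < k - 1`, and `G` a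
finite loopless digraph on `n` vertices with `minrank_q(G) ≤ k`.  Then
`|G| / N(Ḡ, K_l) ≤ 4 q^l (q^k - 1) / ((q² - 1)(q^l - 1))` (stated
cross-multiplied), where `K_l` is the complete digraph on `l` vertices. -/
theorem Nhom_ratio_of_minrank_le (q k l n : ℕ) (hq : IsPrimePow q) (hodd : Odd q)
    (hk : 0 < k) (hl : 1 < l) (hlk : l < k - 1)
    (F : Type) [Field F] [Fintype F] (hF : Fintype.card F = q)
    (G : Fin n → Fin n → Prop) (hloopless : ∀ i, ¬ G i i)
    (hmr : minrank F G ≤ k) :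
    n * ((q ^ 2 - 1) * (q ^ l - 1)) ≤
      Nhom (digraphCompl G) (fun a b : Fin l => a ≠ b) * (4 * q ^ l * (q ^ k - 1)) :=
  Nhom_ratio_of_minrank_le_general q k l n hl hlk F hF G hmr
end
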